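/- Let $m \ge 1$, let $a_{2m-1} \ne 0$, and for $1 \le i, j \le 2m$ consider the Laurent series in $s$ (with $s^2 = x - w$) of the product $d^{-1}\big(\partial_{a_i} y_0\, dx\big) \cdot \partial_{a_j} y_0\, dx$ where $y_0^2 = \sum_{k=1}^{2m-1} a_k (x-w)^{-k} + O(1)$. Its residue at $s = 0$, given leading behaviour $\mathrm{Res}_{s=0}\big(\tfrac{s^{4m+1-2i-2j}}{a_{2m-1}(2m+1-2i)}ds + O(s^{4m+2-2i-2j})ds\big)$, vanishes whenever $i + j \le 2m$ and is nonzero when $i + j = 2m+1$. Consequently, the $2m \times 2m$ matrix with $(i,j)$ entry this residue is anti-triangular with nonzero anti-diagonal, hence invertible. -/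
import Mathlib

lemma aux_ne (m i : ℕ) : (2 * (m : ℂ) + 1 - 2 * (i : ℂ)) ≠ 0 := by
  intro h
  have h2 : ((2 * m + 1 : ℕ) : ℂ) = ((2 * i : ℕ) : ℂ) := by push_cast; linear_combination h
  have := Nat.cast_injective (R := ℂ) h2
  omega

/-- The residues `R i j = Res_{s=0}(d⁻¹(∂_{aᵢ}y₀ dx)·∂_{aⱼ}y₀ dx)` with leading behaviour
`Res(s^{4m+1-2i-2j}/(a_{2m-1}(2m+1-2i)) ds + O(s^{4m+2-2i-2j}) ds)` vanish for
`i + j ≤ 2m` and are nonzero for `i + j = 2m + 1` (where they equal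
`1/(a_{2m-1}(2m+1-2i))`); consequently the `2m × 2m` matrix of residues is
anti-triangular with nonzero anti-diagonal, hence invertible. -/
theorem stmt18 (m : ℕ) (hm : 1 ≤ m) (a : ℂ) (ha : a ≠ 0) (R : ℕ → ℕ → ℂ)
    (hzero : ∀ i j : ℕ, 1 ≤ i → i ≤ 2 * m → 1 ≤ j → j ≤ 2 * m →
      i + j ≤ 2 * m → R i j = 0)
    (hlead : ∀ i j : ℕ, 1 ≤ i → i ≤ 2 * m → 1 ≤ j → j ≤ 2 * m →
      i + j = 2 * m + 1 → R i j = 1 / (a * (2 * (m : ℂ) + 1 - 2 * (i : ℂ)))) :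
    (∀ i j : ℕ, 1 ≤ i → i ≤ 2 * m → 1 ≤ j → j ≤ 2 * m →
      i + j = 2 * m + 1 → R i j ≠ 0) ∧
    IsUnit (Matrix.of fun i j : Fin (2 * m) => R ((i : ℕ) + 1) ((j : ℕ) + 1)) := by
  have hne : ∀ i j : ℕ, 1 ≤ i → i ≤ 2 * m → 1 ≤ j → j ≤ 2 * m →
      i + j = 2 * m + 1 → R i j ≠ 0 := by
    intro i j h1 h2 h3 h4 h5
    rw [hlead i j h1 h2 h3 h4 h5]
    exact one_div_ne_zero (mul_ne_zero ha (aux_ne m i))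
  refine ⟨hne, ?_⟩
  set A : Matrix (Fin (2 * m)) (Fin (2 * m)) ℂ :=
    Matrix.of fun i j : Fin (2 * m) => R ((i : ℕ) + 1) ((j : ℕ) + 1) with hA
  rw [Matrix.isUnit_iff_isUnit_det]
  -- relate det A to det of the column-reversed matrix
  have hperm := Matrix.det_permute' (Fin.revPerm) A
  set B := A.submatrix id Fin.revPerm with hB
  have hBtri : B.BlockTriangular OrderDual.toDual := by
    intro i j hij
    have hij' : (i : ℕ) < (j : ℕ) := hij
    show A i (Fin.rev j) = 0
    have hrev : (Fin.rev j : ℕ) = 2 * m - 1 - (j : ℕ) := by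
      simp [Fin.rev]; omega
    apply hzero <;> omega
  have hdetB : B.det = ∏ i, B i i := Matrix.det_of_lowerTriangular B hBtri
  have hBdiag : ∀ i : Fin (2 * m), B i i ≠ 0 := by
    intro i
    show A i (Fin.rev i) ≠ 0
    have hrev : (Fin.rev i : ℕ) = 2 * m - 1 - (i : ℕ) := by
      simp [Fin.rev]; omega
    have hi := i.isLt
    apply hne <;> omega
  have hdB : B.det ≠ 0 := by
    rw [hdetB]; exact Finset.prod_ne_zero_iff.mpr fun i _ => hBdiag i
  have : A.det ≠ 0 := by
    intro h
    rw [hperm, h, mul_zero] at hdB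
    exact hdB rfl
  exact isUnit_iff_ne_zero.mpr this
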